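/- For every n ≥ 1 and every ε ∈ [0,1/4], the local part of the system P^{n,ε} of n isotropic ε-PRBs is at least (4ε)^{⌈n/2⌉}. -/
import Mathlib


open Finset

/-- n-bit strings. -/
abbrev Bits (n : ℕ) := Fin n → Bool

/-- A bipartite conditional "box" on n-bit alphabets: `P x y u v` is the
probability of outputs `(x, y)` given inputs `(u, v)`. -/
abbrev Box (n : ℕ) := Bits n → Bits n → Bits n → Bits n → ℝ

/-- `P` is a bipartite conditional probability distribution. -/
def IsBox {n : ℕ} (P : Box n) : Prop :=
  (∀ x y u v, 0 ≤ P x y u v) ∧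
  (∀ u v, ∑ x : Bits n, ∑ y : Bits n, P x y u v = 1)

/-- `P` is non-signalling. -/
def NonSignalling {n : ℕ} (P : Box n) : Prop :=
  (∀ y v u u', ∑ x : Bits n, P x y u v = ∑ x : Bits n, P x y u' v) ∧
  (∀ x u v v', ∑ y : Bits n, P x y u v = ∑ y : Bits n, P x y u v')

/-- The local deterministic box given by response functions `f` (Alice) and `g` (Bob). -/
def detBox {n : ℕ} (f g : Bits n → Bits n) : Box n :=
  fun x y u v => if x = f u ∧ y = g v then 1 else 0

/-- `P` is local deterministic. -/
def IsLocalDet {n : ℕ} (P : Box n) : Prop :=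
  ∃ f g : Bits n → Bits n, P = detBox f g

/-- `P` is local: a convex combination of local deterministic boxes. -/
def IsLocal {n : ℕ} (P : Box n) : Prop :=
  ∃ w : (Bits n → Bits n) × (Bits n → Bits n) → ℝ,
    (∀ fg, 0 ≤ w fg) ∧ (∑ fg, w fg = 1) ∧
    (∀ x y u v, P x y u v =
      ∑ fg : (Bits n → Bits n) × (Bits n → Bits n), w fg * detBox fg.1 fg.2 x y u v)

/-- The local part of `P`: the maximal weight `p` such that `P` is a convex
combination of a local box (weight `p`) and a non-signalling box (weight `1 - p`). -/
noncomputable def localPart {n : ℕ} (P : Box n) : ℝ :=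
  sSup {p : ℝ | 0 ≤ p ∧ p ≤ 1 ∧
    ∃ PL PNS : Box n, IsBox PL ∧ IsLocal PL ∧ IsBox PNS ∧ NonSignalling PNS ∧
      ∀ x y u v, P x y u v = p * PL x y u v + (1 - p) * PNS x y u v}

/-- Single-copy isotropic ε-PRB entries. -/
noncomputable def isoPRB1 (ε : ℝ) (x y u v : Bool) : ℝ :=
  if xor x y = (u && v) then (1 - ε) / 2 else ε / 2

/-- The system of n independent isotropic ε-PRBs. -/
noncomputable def isoPRB (n : ℕ) (ε : ℝ) : Box n :=
  fun x y u v => ∏ i : Fin n, isoPRB1 ε (x i) (y i) (u i) (v i)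

/-- Single-copy maximally biased δ-PRB entries. -/
noncomputable def biasedPRB1 (δ : ℝ) (x y u v : Bool) : ℝ :=
  if u && v then
    match x, y with
    | false, false => 0
    | true,  false => 1 / 2 - δ / 2
    | false, true  => 1 / 2 + δ / 2
    | true,  true  => 0
  else
    match x, y with
    | false, false => 1 / 2 - δ / 2
    | true,  false => 0
    | false, true  => δ
    | true,  true  => 1 / 2 - δ / 2

/-- The system of n independent maximally biased δ-PRBs. -/
noncomputable def biasedPRB (n : ℕ) (δ : ℝ) : Box n :=
  fun x y u v => ∏ i : Fin n, biasedPRB1 δ (x i) (y i) (u i) (v i)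


----------------------------------------------------------------
-- auxiliary development
----------------------------------------------------------------

/-- membership in the localPart set. -/
def memS {n : ℕ} (p : ℝ) (P : Box n) : Prop :=
  0 ≤ p ∧ p ≤ 1 ∧
    ∃ PL PNS : Box n, IsBox PL ∧ IsLocal PL ∧ IsBox PNS ∧ NonSignalling PNS ∧
      ∀ x y u v, P x y u v = p * PL x y u v + (1 - p) * PNS x y u v

lemma memS_le_localPart {n : ℕ} {p : ℝ} {P : Box n} (h : memS p P) : p ≤ localPart P := by
  apply le_csSup
  · exact ⟨1, fun q hq => hq.2.1⟩
  · exact h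

lemma detBox_nonneg {n : ℕ} (f g : Bits n → Bits n) (x y u v : Bits n) :
    0 ≤ detBox f g x y u v := by
  unfold detBox; split_ifs <;> norm_num

lemma detBox_sum_xy {n : ℕ} (f g : Bits n → Bits n) (u v : Bits n) :
    ∑ x : Bits n, ∑ y : Bits n, detBox f g x y u v = 1 := by
  simp [detBox, ite_and, Finset.sum_ite_eq']

lemma detBox_sum_x {n : ℕ} (f g : Bits n → Bits n) (y u v : Bits n) :
    ∑ x : Bits n, detBox f g x y u v = if y = g v then 1 else 0 := by
  simp [detBox, ite_and, Finset.sum_ite_eq']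

lemma detBox_sum_y {n : ℕ} (f g : Bits n → Bits n) (x u v : Bits n) :
    ∑ y : Bits n, detBox f g x y u v = if x = f u then 1 else 0 := by
  simp [detBox, ite_and, Finset.sum_ite_eq']

lemma isLocal_isBox {n : ℕ} {P : Box n} (h : IsLocal P) : IsBox P := by
  obtain ⟨w, hw0, hw1, hwe⟩ := h
  constructor
  · intro x y u v
    rw [hwe]
    exact Finset.sum_nonneg fun fg _ => mul_nonneg (hw0 fg) (detBox_nonneg _ _ _ _ _ _)
  · intro u v
    simp only [hwe]
    calc (∑ x : Bits n, ∑ y : Bits n, ∑ fg : (Bits n → Bits n) × (Bits n → Bits n),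
            w fg * detBox fg.1 fg.2 x y u v)
        = ∑ x : Bits n, ∑ fg : (Bits n → Bits n) × (Bits n → Bits n), ∑ y : Bits n,
            w fg * detBox fg.1 fg.2 x y u v :=
          Finset.sum_congr rfl fun x _ => Finset.sum_comm
      _ = ∑ fg : (Bits n → Bits n) × (Bits n → Bits n), ∑ x : Bits n, ∑ y : Bits n,
            w fg * detBox fg.1 fg.2 x y u v := Finset.sum_comm
      _ = ∑ fg : (Bits n → Bits n) × (Bits n → Bits n), w fg := by
          refine Finset.sum_congr rfl fun fg _ => ?_
          simp only [← Finset.mul_sum]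
          rw [detBox_sum_xy, mul_one]
      _ = 1 := hw1

lemma isLocal_ns {n : ℕ} {P : Box n} (h : IsLocal P) : NonSignalling P := by
  obtain ⟨w, hw0, hw1, hwe⟩ := h
  constructor
  · intro y v u u'
    have key : ∀ u : Bits n, ∑ x : Bits n, P x y u v
        = ∑ fg : (Bits n → Bits n) × (Bits n → Bits n),
            w fg * (if y = fg.2 v then 1 else 0) := by
      intro u
      simp only [hwe]
      rw [Finset.sum_comm]
      exact Finset.sum_congr rfl fun fg _ => by rw [← Finset.mul_sum, detBox_sum_x]
    rw [key, key]
  · intro x u v v'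
    have key : ∀ v : Bits n, ∑ y : Bits n, P x y u v
        = ∑ fg : (Bits n → Bits n) × (Bits n → Bits n),
            w fg * (if x = fg.1 u then 1 else 0) := by
      intro v
      simp only [hwe]
      rw [Finset.sum_comm]
      exact Finset.sum_congr rfl fun fg _ => by rw [← Finset.mul_sum, detBox_sum_y]
    rw [key, key]

/-- A finite mixture of deterministic boxes. -/
def mixBox {n M : ℕ} (S : Fin M → (Bits n → Bits n) × (Bits n → Bits n))
    (c : Fin M → ℝ) : Box n :=
  fun x y u v => ∑ i : Fin M, c i * detBox (S i).1 (S i).2 x y u v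

lemma mixBox_isLocal {n M : ℕ} (S : Fin M → (Bits n → Bits n) × (Bits n → Bits n))
    (c : Fin M → ℝ) (hc : ∀ i, 0 ≤ c i) (hs : ∑ i, c i = 1) : IsLocal (mixBox S c) := by
  refine ⟨fun fg => ∑ i : Fin M, c i * (if fg = S i then 1 else 0), ?_, ?_, ?_⟩
  · intro fg
    refine Finset.sum_nonneg fun i _ => mul_nonneg (hc i) ?_
    split_ifs <;> norm_num
  · have key : ∀ i : Fin M, (∑ fg : (Bits n → Bits n) × (Bits n → Bits n),
        c i * (if fg = S i then 1 else 0)) = c i := by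
      intro i
      rw [← Finset.mul_sum]
      simp [Finset.sum_ite_eq']
    rw [Finset.sum_comm]
    simp only [key]
    exact hs
  · intro x y u v
    symm
    calc (∑ fg : (Bits n → Bits n) × (Bits n → Bits n),
            (∑ i : Fin M, c i * (if fg = S i then 1 else 0)) * detBox fg.1 fg.2 x y u v)
        = ∑ fg : (Bits n → Bits n) × (Bits n → Bits n), ∑ i : Fin M,
            (c i * (if fg = S i then 1 else 0)) * detBox fg.1 fg.2 x y u v :=
          Finset.sum_congr rfl fun fg _ => Finset.sum_mul _ _ _
      _ = ∑ i : Fin M, ∑ fg : (Bits n → Bits n) × (Bits n → Bits n),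
            (c i * (if fg = S i then 1 else 0)) * detBox fg.1 fg.2 x y u v :=
          Finset.sum_comm
      _ = mixBox S c x y u v := by
          refine Finset.sum_congr rfl fun i _ => ?_
          simp [mul_ite, ite_mul, Finset.sum_ite_eq']

----------------------------------------------------------------
-- tensor products of boxes
----------------------------------------------------------------

def fstB {m k : ℕ} (x : Bits (m + k)) : Bits m := fun i => x (Fin.castAdd k i)
def sndB {m k : ℕ} (x : Bits (m + k)) : Bits k := fun i => x (Fin.natAdd m i)

lemma fstB_append {m k : ℕ} (a : Bits m) (b : Bits k) : fstB (Fin.append a b) = a := by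
  funext i; simp [fstB]

lemma sndB_append {m k : ℕ} (a : Bits m) (b : Bits k) : sndB (Fin.append a b) = b := by
  funext i; simp [sndB]

lemma append_fstB_sndB {m k : ℕ} (x : Bits (m + k)) : Fin.append (fstB x) (sndB x) = x := by
  funext i
  refine Fin.addCases (fun j => ?_) (fun j => ?_) i
  · rw [Fin.append_left]; rfl
  · rw [Fin.append_right]; rfl

def appEquiv (m k : ℕ) : Bits m × Bits k ≃ Bits (m + k) where
  toFun p := Fin.append p.1 p.2
  invFun x := (fstB x, sndB x)
  left_inv p := by simp [fstB_append, sndB_append]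
  right_inv x := append_fstB_sndB x

lemma sum_bits_add {m k : ℕ} (f : Bits (m + k) → ℝ) :
    ∑ x : Bits (m + k), f x = ∑ a : Bits m, ∑ b : Bits k, f (Fin.append a b) := by
  rw [← Equiv.sum_comp (appEquiv m k) f]
  rw [Fintype.sum_prod_type]
  rfl

lemma eq_append_iff {m k : ℕ} {x : Bits (m + k)} {a : Bits m} {b : Bits k} :
    x = Fin.append a b ↔ fstB x = a ∧ sndB x = b := by
  constructor
  · rintro rfl
    exact ⟨fstB_append a b, sndB_append a b⟩
  · rintro ⟨h1, h2⟩
    rw [← h1, ← h2, append_fstB_sndB]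

/-- Tensor product of two boxes. -/
def tensor {m k : ℕ} (P : Box m) (Q : Box k) : Box (m + k) :=
  fun x y u v => P (fstB x) (fstB y) (fstB u) (fstB v) * Q (sndB x) (sndB y) (sndB u) (sndB v)

lemma isoPRB_add (m k : ℕ) (ε : ℝ) :
    isoPRB (m + k) ε = tensor (isoPRB m ε) (isoPRB k ε) := by
  funext x y u v
  unfold isoPRB tensor
  rw [Fin.prod_univ_add]
  rfl

lemma tensor_sum_x {m k : ℕ} (P : Box m) (Q : Box k) (y u v : Bits (m + k)) :
    ∑ x : Bits (m + k), tensor P Q x y u v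
      = (∑ a : Bits m, P a (fstB y) (fstB u) (fstB v))
        * ∑ b : Bits k, Q b (sndB y) (sndB u) (sndB v) := by
  rw [sum_bits_add, Finset.sum_mul_sum]
  refine Finset.sum_congr rfl fun a _ => Finset.sum_congr rfl fun b _ => ?_
  unfold tensor
  rw [fstB_append, sndB_append]

lemma tensor_sum_y {m k : ℕ} (P : Box m) (Q : Box k) (x u v : Bits (m + k)) :
    ∑ y : Bits (m + k), tensor P Q x y u v
      = (∑ a : Bits m, P (fstB x) a (fstB u) (fstB v))
        * ∑ b : Bits k, Q (sndB x) b (sndB u) (sndB v) := by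
  rw [sum_bits_add, Finset.sum_mul_sum]
  refine Finset.sum_congr rfl fun a _ => Finset.sum_congr rfl fun b _ => ?_
  unfold tensor
  rw [fstB_append, sndB_append]

lemma tensor_isBox {m k : ℕ} {P : Box m} {Q : Box k} (hP : IsBox P) (hQ : IsBox Q) :
    IsBox (tensor P Q) := by
  constructor
  · intro x y u v
    exact mul_nonneg (hP.1 _ _ _ _) (hQ.1 _ _ _ _)
  · intro u v
    simp only [tensor_sum_y]
    rw [sum_bits_add]
    simp only [fstB_append, sndB_append]
    rw [← Finset.sum_mul_sum]
    rw [hP.2, hQ.2, one_mul]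

lemma tensor_ns {m k : ℕ} {P : Box m} {Q : Box k}
    (hP : NonSignalling P) (hQ : NonSignalling Q) : NonSignalling (tensor P Q) := by
  constructor
  · intro y v u u'
    rw [tensor_sum_x, tensor_sum_x, hP.1 _ _ _ (fstB u'), hQ.1 _ _ _ (sndB u')]
  · intro x u v v'
    rw [tensor_sum_y, tensor_sum_y, hP.2 _ _ _ (fstB v'), hQ.2 _ _ _ (sndB v')]

def combF {m k : ℕ} (f1 : Bits m → Bits m) (f2 : Bits k → Bits k) :
    Bits (m + k) → Bits (m + k) :=
  fun u => Fin.append (f1 (fstB u)) (f2 (sndB u))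

lemma detBox_comb {m k : ℕ} (f1 g1 : Bits m → Bits m) (f2 g2 : Bits k → Bits k)
    (x y u v : Bits (m + k)) :
    detBox (combF f1 f2) (combF g1 g2) x y u v
      = detBox f1 g1 (fstB x) (fstB y) (fstB u) (fstB v)
        * detBox f2 g2 (sndB x) (sndB y) (sndB u) (sndB v) := by
  unfold detBox combF
  simp only [eq_append_iff]
  by_cases h1 : fstB x = f1 (fstB u) <;> by_cases h2 : sndB x = f2 (sndB u) <;>
    by_cases h3 : fstB y = g1 (fstB v) <;> by_cases h4 : sndB y = g2 (sndB v) <;>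
    simp [h1, h2, h3, h4]

lemma tensor_isLocal {m k : ℕ} {P : Box m} {Q : Box k} (hP : IsLocal P) (hQ : IsLocal Q) :
    IsLocal (tensor P Q) := by
  classical
  obtain ⟨w1, h1n, h1s, h1e⟩ := hP
  obtain ⟨w2, h2n, h2s, h2e⟩ := hQ
  refine ⟨fun H => ∑ F : (Bits m → Bits m) × (Bits m → Bits m),
      ∑ G : (Bits k → Bits k) × (Bits k → Bits k),
        w1 F * w2 G * (if H = (combF F.1 G.1, combF F.2 G.2) then 1 else 0), ?_, ?_, ?_⟩
  · intro H
    refine Finset.sum_nonneg fun F _ => Finset.sum_nonneg fun G _ => ?_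
    refine mul_nonneg (mul_nonneg (h1n F) (h2n G)) ?_
    split_ifs <;> norm_num
  · rw [Finset.sum_comm]
    have key : ∀ F, (∑ H : (Bits (m+k) → Bits (m+k)) × (Bits (m+k) → Bits (m+k)),
        ∑ G : (Bits k → Bits k) × (Bits k → Bits k),
          w1 F * w2 G * (if H = (combF F.1 G.1, combF F.2 G.2) then 1 else 0))
        = w1 F := by
      intro F
      rw [Finset.sum_comm]
      have inner : ∀ G, (∑ H : (Bits (m+k) → Bits (m+k)) × (Bits (m+k) → Bits (m+k)),
          w1 F * w2 G * (if H = (combF F.1 G.1, combF F.2 G.2) then 1 else 0))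
          = w1 F * w2 G := by
        intro G
        rw [← Finset.mul_sum]
        simp [Finset.sum_ite_eq']
      simp only [inner]
      rw [← Finset.mul_sum, h2s, mul_one]
    simp only [key]
    exact h1s
  · intro x y u v
    have lhs_eq : tensor P Q x y u v
        = ∑ F : (Bits m → Bits m) × (Bits m → Bits m),
            ∑ G : (Bits k → Bits k) × (Bits k → Bits k),
              w1 F * w2 G * detBox (combF F.1 G.1) (combF F.2 G.2) x y u v := by
      unfold tensor
      rw [h1e, h2e, Finset.sum_mul_sum]
      refine Finset.sum_congr rfl fun F _ => Finset.sum_congr rfl fun G _ => ?_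
      rw [detBox_comb]
      ring
    rw [lhs_eq]
    symm
    calc (∑ H : (Bits (m+k) → Bits (m+k)) × (Bits (m+k) → Bits (m+k)),
            (∑ F : (Bits m → Bits m) × (Bits m → Bits m),
              ∑ G : (Bits k → Bits k) × (Bits k → Bits k),
                w1 F * w2 G * (if H = (combF F.1 G.1, combF F.2 G.2) then 1 else 0))
              * detBox H.1 H.2 x y u v)
        = ∑ H : (Bits (m+k) → Bits (m+k)) × (Bits (m+k) → Bits (m+k)),
            ∑ F : (Bits m → Bits m) × (Bits m → Bits m),
              ∑ G : (Bits k → Bits k) × (Bits k → Bits k),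
                (w1 F * w2 G * (if H = (combF F.1 G.1, combF F.2 G.2) then 1 else 0))
                  * detBox H.1 H.2 x y u v := by
          refine Finset.sum_congr rfl fun H _ => ?_
          rw [Finset.sum_mul]
          exact Finset.sum_congr rfl fun F _ => Finset.sum_mul _ _ _
      _ = ∑ F : (Bits m → Bits m) × (Bits m → Bits m),
            ∑ H : (Bits (m+k) → Bits (m+k)) × (Bits (m+k) → Bits (m+k)),
              ∑ G : (Bits k → Bits k) × (Bits k → Bits k),
                (w1 F * w2 G * (if H = (combF F.1 G.1, combF F.2 G.2) then 1 else 0))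
                  * detBox H.1 H.2 x y u v := Finset.sum_comm
      _ = ∑ F : (Bits m → Bits m) × (Bits m → Bits m),
            ∑ G : (Bits k → Bits k) × (Bits k → Bits k),
              ∑ H : (Bits (m+k) → Bits (m+k)) × (Bits (m+k) → Bits (m+k)),
                (w1 F * w2 G * (if H = (combF F.1 G.1, combF F.2 G.2) then 1 else 0))
                  * detBox H.1 H.2 x y u v :=
          Finset.sum_congr rfl fun F _ => Finset.sum_comm
      _ = ∑ F : (Bits m → Bits m) × (Bits m → Bits m),
            ∑ G : (Bits k → Bits k) × (Bits k → Bits k),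
              w1 F * w2 G * detBox (combF F.1 G.1) (combF F.2 G.2) x y u v := by
          refine Finset.sum_congr rfl fun F _ => Finset.sum_congr rfl fun G _ => ?_
          simp [ite_mul, Finset.sum_ite_eq']

lemma tensor_memS {m k : ℕ} {P : Box m} {Q : Box k} {p q : ℝ}
    (hP : memS p P) (hQ : memS q Q) : memS (p * q) (tensor P Q) := by
  obtain ⟨hp0, hp1, PL, PN, hPLb, hPLl, hPNb, hPNns, hPe⟩ := hP
  obtain ⟨hq0, hq1, QL, QN, hQLb, hQLl, hQNb, hQNns, hQe⟩ := hQ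
  have hpq0 : 0 ≤ p * q := mul_nonneg hp0 hq0
  have hpq1 : p * q ≤ 1 := mul_le_one₀ hp1 hq0 hq1
  by_cases hpq : p * q = 1
  · -- then p = q = 1 and P = PL, Q = QL
    have hp : p = 1 := le_antisymm hp1 (by nlinarith)
    have hq : q = 1 := le_antisymm hq1 (by nlinarith)
    refine ⟨hpq0, hpq1, tensor PL QL, tensor PN QN, tensor_isBox hPLb hQLb,
      tensor_isLocal hPLl hQLl, tensor_isBox hPNb hQNb, tensor_ns hPNns hQNns, ?_⟩
    subst hp
    subst hq
    intro x y u v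
    have e1 := hPe (fstB x) (fstB y) (fstB u) (fstB v)
    have e2 := hQe (sndB x) (sndB y) (sndB u) (sndB v)
    simp only [tensor]
    rw [e1, e2]
    ring
  · have hs : 0 < 1 - p * q := lt_of_le_of_ne (by linarith) (by intro h; exact hpq (by linarith))
    set R : Box (m + k) := fun x y u v =>
      (p * (1 - q) * tensor PL QN x y u v + (1 - p) * q * tensor PN QL x y u v
        + (1 - p) * (1 - q) * tensor PN QN x y u v) / (1 - p * q) with hR
    have c1 : (0:ℝ) ≤ p * (1 - q) := mul_nonneg hp0 (by linarith)
    have c2 : (0:ℝ) ≤ (1 - p) * q := mul_nonneg (by linarith) hq0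
    have c3 : (0:ℝ) ≤ (1 - p) * (1 - q) := mul_nonneg (by linarith) (by linarith)
    have B1 := tensor_isBox hPLb hQNb
    have B2 := tensor_isBox hPNb hQLb
    have B3 := tensor_isBox hPNb hQNb
    have N1 := tensor_ns (isLocal_ns hPLl) hQNns
    have N2 := tensor_ns hPNns (isLocal_ns hQLl)
    have N3 := tensor_ns hPNns hQNns
    have key : ∀ (F G H : Bits (m + k) → ℝ),
        (∑ x : Bits (m + k),
          (p * (1 - q) * F x + (1 - p) * q * G x + (1 - p) * (1 - q) * H x) / (1 - p * q))
        = (p * (1 - q) * (∑ x : Bits (m + k), F x) + (1 - p) * q * (∑ x : Bits (m + k), G x)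
            + (1 - p) * (1 - q) * (∑ x : Bits (m + k), H x)) / (1 - p * q) := by
      intro F G H
      rw [← Finset.sum_div]
      congr 1
      rw [Finset.sum_add_distrib, Finset.sum_add_distrib, Finset.mul_sum, Finset.mul_sum,
        Finset.mul_sum]
    refine ⟨hpq0, hpq1, tensor PL QL, R, tensor_isBox hPLb hQLb,
      tensor_isLocal hPLl hQLl, ⟨?_, ?_⟩, ⟨?_, ?_⟩, ?_⟩
    · intro x y u v
      apply div_nonneg _ (le_of_lt hs)
      have := B1.1 x y u v; have := B2.1 x y u v; have := B3.1 x y u v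
      nlinarith
    · intro u v
      simp only [hR]
      calc (∑ x : Bits (m+k), ∑ y : Bits (m+k),
              (p * (1 - q) * tensor PL QN x y u v + (1 - p) * q * tensor PN QL x y u v
                + (1 - p) * (1 - q) * tensor PN QN x y u v) / (1 - p * q))
          = ∑ x : Bits (m+k),
              (p * (1 - q) * (∑ y : Bits (m+k), tensor PL QN x y u v)
                + (1 - p) * q * (∑ y : Bits (m+k), tensor PN QL x y u v)
                + (1 - p) * (1 - q) * (∑ y : Bits (m+k), tensor PN QN x y u v)) / (1 - p * q) :=
            Finset.sum_congr rfl fun x _ => key _ _ _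
        _ = (p * (1 - q) * (∑ x : Bits (m+k), ∑ y : Bits (m+k), tensor PL QN x y u v)
              + (1 - p) * q * (∑ x : Bits (m+k), ∑ y : Bits (m+k), tensor PN QL x y u v)
              + (1 - p) * (1 - q) * (∑ x : Bits (m+k), ∑ y : Bits (m+k), tensor PN QN x y u v))
              / (1 - p * q) := key _ _ _
        _ = 1 := by
            rw [B1.2, B2.2, B3.2]
            field_simp
            ring
    · intro y v u u'
      simp only [hR]
      rw [key, key, N1.1 y v u u', N2.1 y v u u', N3.1 y v u u']
    · intro x u v v'
      simp only [hR]
      rw [key, key, N1.2 x u v v', N2.2 x u v v', N3.2 x u v v']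
    · intro x y u v
      have e1 := hPe (fstB x) (fstB y) (fstB u) (fstB v)
      have e2 := hQe (sndB x) (sndB y) (sndB u) (sndB v)
      simp only [hR, tensor]
      rw [e1, e2]
      field_simp
      ring

----------------------------------------------------------------
-- concrete local models
----------------------------------------------------------------

abbrev Strat1 := (Bits 1 → Bits 1) × (Bits 1 → Bits 1)
abbrev Strat2 := (Bits 2 → Bits 2) × (Bits 2 → Bits 2)

def c1 (b : Bool) : Bits 1 := fun _ => b
def bb (p q : Bool) : Bits 2 := ![p, q]

def mkF1 (t0 t1 : Bits 1) : Bits 1 → Bits 1 := fun u => if u 0 then t1 else t0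

def mkF (t0 t1 t2 t3 : Bits 2) : Bits 2 → Bits 2 :=
  fun u => if u 0 then (if u 1 then t3 else t1) else (if u 1 then t2 else t0)

lemma eta1 (x : Bits 1) : c1 (x 0) = x := by
  funext i
  rw [Subsingleton.elim i 0]
  rfl

lemma eta2 (x : Bits 2) : bb (x 0) (x 1) = x := by
  funext i
  fin_cases i <;> rfl

def S1 : Fin 8 → Strat1 := ![
  (mkF1 (c1 false) (c1 false), mkF1 (c1 false) (c1 false)),
  (mkF1 (c1 false) (c1 false), mkF1 (c1 false) (c1 true)),
  (mkF1 (c1 false) (c1 true), mkF1 (c1 false) (c1 false)),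
  (mkF1 (c1 false) (c1 true), mkF1 (c1 true) (c1 false)),
  (mkF1 (c1 true) (c1 false), mkF1 (c1 false) (c1 true)),
  (mkF1 (c1 true) (c1 false), mkF1 (c1 true) (c1 true)),
  (mkF1 (c1 true) (c1 true), mkF1 (c1 true) (c1 false)),
  (mkF1 (c1 true) (c1 true), mkF1 (c1 true) (c1 true))]

def N1 (x y u v : Bits 1) : ℕ :=
  ∑ i : Fin 8, (if x = (S1 i).1 u ∧ y = (S1 i).2 v then 1 else 0)

set_option maxRecDepth 10000 in
lemma factN1 : ∀ a c e g : Bool,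
    N1 (c1 a) (c1 c) (c1 e) (c1 g) = if xor a c = (e && g) then 3 else 1 := by decide

def SA : Fin 64 → Strat2 :=
  ![
  (mkF (bb false false) (bb false false) (bb false false) (bb true false), mkF (bb false false) (bb false false) (bb false true) (bb false false)),
  (mkF (bb false false) (bb false false) (bb false false) (bb false true), mkF (bb false false) (bb true false) (bb false false) (bb false false)),
  (mkF (bb false false) (bb false false) (bb true false) (bb false false), mkF (bb false false) (bb true false) (bb false true) (bb true false)),
  (mkF (bb false false) (bb false false) (bb false true) (bb false false), mkF (bb false false) (bb false false) (bb false false) (bb true false)),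
  (mkF (bb false false) (bb false false) (bb false true) (bb true true), mkF (bb false true) (bb false false) (bb false false) (bb false false)),
  (mkF (bb false false) (bb false false) (bb true true) (bb false true), mkF (bb false true) (bb true false) (bb false false) (bb true false)),
  (mkF (bb false false) (bb true false) (bb false false) (bb false false), mkF (bb false false) (bb false false) (bb false false) (bb false true)),
  (mkF (bb false false) (bb true false) (bb false false) (bb true true), mkF (bb true false) (bb false false) (bb false false) (bb false false)),
  (mkF (bb false false) (bb true false) (bb true false) (bb true false), mkF (bb true false) (bb false false) (bb true false) (bb false true)),
  (mkF (bb false false) (bb true false) (bb false true) (bb true false), mkF (bb false false) (bb false false) (bb true false) (bb false false)),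
  (mkF (bb false false) (bb true false) (bb false true) (bb false true), mkF (bb false false) (bb false true) (bb false false) (bb false false)),
  (mkF (bb false false) (bb true false) (bb true true) (bb true true), mkF (bb true false) (bb false true) (bb true false) (bb false false)),
  (mkF (bb false false) (bb false true) (bb false false) (bb false false), mkF (bb false false) (bb true false) (bb false true) (bb false true)),
  (mkF (bb false false) (bb false true) (bb false true) (bb false true), mkF (bb false true) (bb false true) (bb false false) (bb true false)),
  (mkF (bb false false) (bb true true) (bb false false) (bb true false), mkF (bb true false) (bb false false) (bb false true) (bb false true)),
  (mkF (bb false false) (bb true true) (bb false true) (bb true true), mkF (bb false true) (bb false true) (bb true false) (bb false false)),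
  (mkF (bb true false) (bb false false) (bb false false) (bb false false), mkF (bb false false) (bb true false) (bb false false) (bb true true)),
  (mkF (bb true false) (bb false false) (bb true false) (bb true false), mkF (bb true false) (bb true false) (bb true false) (bb true true)),
  (mkF (bb true false) (bb false false) (bb true false) (bb false true), mkF (bb false false) (bb true false) (bb true false) (bb true false)),
  (mkF (bb true false) (bb false false) (bb false true) (bb false true), mkF (bb false false) (bb true true) (bb false false) (bb true false)),
  (mkF (bb true false) (bb false false) (bb true true) (bb false false), mkF (bb true false) (bb true false) (bb false false) (bb true false)),
  (mkF (bb true false) (bb false false) (bb true true) (bb true true), mkF (bb true false) (bb true true) (bb true false) (bb true false)),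
  (mkF (bb true false) (bb true false) (bb false false) (bb true false), mkF (bb true false) (bb false false) (bb true true) (bb false false)),
  (mkF (bb true false) (bb true false) (bb true false) (bb false false), mkF (bb true false) (bb true false) (bb true true) (bb true false)),
  (mkF (bb true false) (bb true false) (bb true false) (bb true true), mkF (bb true false) (bb false false) (bb true false) (bb true false)),
  (mkF (bb true false) (bb true false) (bb false true) (bb true true), mkF (bb true true) (bb false false) (bb true false) (bb false false)),
  (mkF (bb true false) (bb true false) (bb true true) (bb true false), mkF (bb true false) (bb true false) (bb true false) (bb false false)),
  (mkF (bb true false) (bb true false) (bb true true) (bb false true), mkF (bb true true) (bb true false) (bb true false) (bb true false)),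
  (mkF (bb true false) (bb false true) (bb true false) (bb false false), mkF (bb false false) (bb true false) (bb true true) (bb true true)),
  (mkF (bb true false) (bb false true) (bb true true) (bb false true), mkF (bb true true) (bb true true) (bb false false) (bb true false)),
  (mkF (bb true false) (bb true true) (bb true false) (bb true false), mkF (bb true false) (bb false false) (bb true true) (bb true true)),
  (mkF (bb true false) (bb true true) (bb true true) (bb true true), mkF (bb true true) (bb true true) (bb true false) (bb false false)),
  (mkF (bb false true) (bb false false) (bb false false) (bb false false), mkF (bb false false) (bb false false) (bb false true) (bb true true)),
  (mkF (bb false true) (bb false false) (bb false true) (bb false true), mkF (bb false true) (bb true true) (bb false false) (bb false false)),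
  (mkF (bb false true) (bb true false) (bb false false) (bb true false), mkF (bb false false) (bb false false) (bb true true) (bb false true)),
  (mkF (bb false true) (bb true false) (bb false true) (bb true true), mkF (bb true true) (bb false true) (bb false false) (bb false false)),
  (mkF (bb false true) (bb false true) (bb false false) (bb true false), mkF (bb false false) (bb false true) (bb false true) (bb false true)),
  (mkF (bb false true) (bb false true) (bb false false) (bb false true), mkF (bb false true) (bb false true) (bb false true) (bb true true)),
  (mkF (bb false true) (bb false true) (bb true false) (bb false false), mkF (bb false false) (bb true true) (bb false true) (bb true true)),
  (mkF (bb false true) (bb false true) (bb false true) (bb false false), mkF (bb false true) (bb true true) (bb false true) (bb false true)),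
  (mkF (bb false true) (bb false true) (bb false true) (bb true true), mkF (bb false true) (bb false true) (bb false false) (bb false true)),
  (mkF (bb false true) (bb false true) (bb true true) (bb false true), mkF (bb false true) (bb true true) (bb false false) (bb true true)),
  (mkF (bb false true) (bb true true) (bb false false) (bb false false), mkF (bb false true) (bb false false) (bb false true) (bb false true)),
  (mkF (bb false true) (bb true true) (bb false false) (bb true true), mkF (bb false true) (bb false true) (bb true true) (bb false true)),
  (mkF (bb false true) (bb true true) (bb true false) (bb true false), mkF (bb true true) (bb false false) (bb true true) (bb false true)),
  (mkF (bb false true) (bb true true) (bb false true) (bb true false), mkF (bb true true) (bb false true) (bb false true) (bb false true)),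
  (mkF (bb false true) (bb true true) (bb false true) (bb false true), mkF (bb false true) (bb false true) (bb false true) (bb false false)),
  (mkF (bb false true) (bb true true) (bb true true) (bb true true), mkF (bb true true) (bb false true) (bb true true) (bb false false)),
  (mkF (bb true true) (bb false false) (bb true false) (bb false false), mkF (bb true false) (bb true false) (bb false true) (bb true true)),
  (mkF (bb true true) (bb false false) (bb true true) (bb false true), mkF (bb false true) (bb true true) (bb true false) (bb true false)),
  (mkF (bb true true) (bb true false) (bb true false) (bb true false), mkF (bb true false) (bb true false) (bb true true) (bb false true)),
  (mkF (bb true true) (bb true false) (bb true true) (bb true true), mkF (bb true true) (bb false true) (bb true false) (bb true false)),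
  (mkF (bb true true) (bb false true) (bb false false) (bb false false), mkF (bb false true) (bb true false) (bb false true) (bb true true)),
  (mkF (bb true true) (bb false true) (bb true false) (bb true false), mkF (bb true true) (bb true false) (bb true true) (bb true true)),
  (mkF (bb true true) (bb false true) (bb true false) (bb false true), mkF (bb true true) (bb true true) (bb false true) (bb true true)),
  (mkF (bb true true) (bb false true) (bb false true) (bb false true), mkF (bb false true) (bb true true) (bb false true) (bb true false)),
  (mkF (bb true true) (bb false true) (bb true true) (bb false false), mkF (bb false true) (bb true true) (bb true true) (bb true true)),
  (mkF (bb true true) (bb false true) (bb true true) (bb true true), mkF (bb true true) (bb true true) (bb true true) (bb true false)),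
  (mkF (bb true true) (bb true true) (bb false false) (bb true false), mkF (bb true false) (bb false true) (bb true true) (bb false true)),
  (mkF (bb true true) (bb true true) (bb true false) (bb false false), mkF (bb true false) (bb true true) (bb true true) (bb true true)),
  (mkF (bb true true) (bb true true) (bb true false) (bb true true), mkF (bb true true) (bb true true) (bb true true) (bb false true)),
  (mkF (bb true true) (bb true true) (bb false true) (bb true true), mkF (bb true true) (bb false true) (bb true false) (bb false true)),
  (mkF (bb true true) (bb true true) (bb true true) (bb true false), mkF (bb true true) (bb false true) (bb true true) (bb true true)),
  (mkF (bb true true) (bb true true) (bb true true) (bb false true), mkF (bb true true) (bb true true) (bb true false) (bb true true))]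

def SB : Fin 64 → Strat2 :=
  ![
  (mkF (bb false false) (bb false false) (bb false false) (bb true false), mkF (bb false false) (bb false false) (bb false false) (bb false true)),
  (mkF (bb false false) (bb false false) (bb false false) (bb false true), mkF (bb false false) (bb false false) (bb false false) (bb true false)),
  (mkF (bb false false) (bb false false) (bb true false) (bb false false), mkF (bb false false) (bb true false) (bb false false) (bb true true)),
  (mkF (bb false false) (bb false false) (bb false true) (bb false false), mkF (bb false false) (bb true false) (bb false false) (bb false false)),
  (mkF (bb false false) (bb false false) (bb false true) (bb true true), mkF (bb false false) (bb false true) (bb false false) (bb false false)),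
  (mkF (bb false false) (bb false false) (bb true true) (bb false true), mkF (bb false false) (bb true true) (bb false false) (bb true false)),
  (mkF (bb false false) (bb true false) (bb false false) (bb false false), mkF (bb false false) (bb false false) (bb false true) (bb false false)),
  (mkF (bb false false) (bb true false) (bb false false) (bb true true), mkF (bb false false) (bb false false) (bb true false) (bb false false)),
  (mkF (bb false false) (bb true false) (bb true false) (bb true false), mkF (bb true false) (bb false false) (bb true true) (bb false false)),
  (mkF (bb false false) (bb true false) (bb false true) (bb true false), mkF (bb true false) (bb false false) (bb false false) (bb false false)),
  (mkF (bb false false) (bb true false) (bb false true) (bb false true), mkF (bb false true) (bb false false) (bb false false) (bb false false)),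
  (mkF (bb false false) (bb true false) (bb true true) (bb true true), mkF (bb true true) (bb false false) (bb true false) (bb false false)),
  (mkF (bb false false) (bb false true) (bb false false) (bb false false), mkF (bb false false) (bb false false) (bb false true) (bb true true)),
  (mkF (bb false false) (bb false true) (bb false true) (bb false true), mkF (bb false true) (bb true true) (bb false false) (bb false false)),
  (mkF (bb false false) (bb true true) (bb false false) (bb true false), mkF (bb false false) (bb false false) (bb true true) (bb false true)),
  (mkF (bb false false) (bb true true) (bb false true) (bb true true), mkF (bb true true) (bb false true) (bb false false) (bb false false)),
  (mkF (bb true false) (bb false false) (bb false false) (bb false false), mkF (bb false false) (bb true false) (bb false true) (bb true false)),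
  (mkF (bb true false) (bb false false) (bb true false) (bb true false), mkF (bb true false) (bb true false) (bb true true) (bb true false)),
  (mkF (bb true false) (bb false false) (bb true false) (bb false true), mkF (bb true false) (bb true false) (bb false false) (bb true false)),
  (mkF (bb true false) (bb false false) (bb false true) (bb false true), mkF (bb false true) (bb true false) (bb false false) (bb true false)),
  (mkF (bb true false) (bb false false) (bb true true) (bb false false), mkF (bb false false) (bb true false) (bb true false) (bb true false)),
  (mkF (bb true false) (bb false false) (bb true true) (bb true true), mkF (bb true true) (bb true false) (bb true false) (bb true false)),
  (mkF (bb true false) (bb true false) (bb false false) (bb true false), mkF (bb true false) (bb false false) (bb true false) (bb false true)),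
  (mkF (bb true false) (bb true false) (bb true false) (bb false false), mkF (bb true false) (bb true false) (bb true false) (bb true true)),
  (mkF (bb true false) (bb true false) (bb true false) (bb true true), mkF (bb true false) (bb true false) (bb true false) (bb false false)),
  (mkF (bb true false) (bb true false) (bb false true) (bb true true), mkF (bb true false) (bb false true) (bb true false) (bb false false)),
  (mkF (bb true false) (bb true false) (bb true true) (bb true false), mkF (bb true false) (bb false false) (bb true false) (bb true false)),
  (mkF (bb true false) (bb true false) (bb true true) (bb false true), mkF (bb true false) (bb true true) (bb true false) (bb true false)),
  (mkF (bb true false) (bb false true) (bb true false) (bb false false), mkF (bb true false) (bb true false) (bb false true) (bb true true)),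
  (mkF (bb true false) (bb false true) (bb true true) (bb false true), mkF (bb false true) (bb true true) (bb true false) (bb true false)),
  (mkF (bb true false) (bb true true) (bb true false) (bb true false), mkF (bb true false) (bb true false) (bb true true) (bb false true)),
  (mkF (bb true false) (bb true true) (bb true true) (bb true true), mkF (bb true true) (bb false true) (bb true false) (bb true false)),
  (mkF (bb false true) (bb false false) (bb false false) (bb false false), mkF (bb false false) (bb true false) (bb false true) (bb false true)),
  (mkF (bb false true) (bb false false) (bb false true) (bb false true), mkF (bb false true) (bb false true) (bb false false) (bb true false)),
  (mkF (bb false true) (bb true false) (bb false false) (bb true false), mkF (bb true false) (bb false false) (bb false true) (bb false true)),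
  (mkF (bb false true) (bb true false) (bb false true) (bb true true), mkF (bb false true) (bb false true) (bb true false) (bb false false)),
  (mkF (bb false true) (bb false true) (bb false false) (bb true false), mkF (bb false true) (bb false false) (bb false true) (bb false true)),
  (mkF (bb false true) (bb false true) (bb false false) (bb false true), mkF (bb false true) (bb true true) (bb false true) (bb false true)),
  (mkF (bb false true) (bb false true) (bb true false) (bb false false), mkF (bb false true) (bb true false) (bb false true) (bb true true)),
  (mkF (bb false true) (bb false true) (bb false true) (bb false false), mkF (bb false true) (bb false true) (bb false true) (bb true true)),
  (mkF (bb false true) (bb false true) (bb false true) (bb true true), mkF (bb false true) (bb false true) (bb false true) (bb false false)),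
  (mkF (bb false true) (bb false true) (bb true true) (bb false true), mkF (bb false true) (bb true true) (bb false true) (bb true false)),
  (mkF (bb false true) (bb true true) (bb false false) (bb false false), mkF (bb false false) (bb false true) (bb false true) (bb false true)),
  (mkF (bb false true) (bb true true) (bb false false) (bb true true), mkF (bb true true) (bb false true) (bb false true) (bb false true)),
  (mkF (bb false true) (bb true true) (bb true false) (bb true false), mkF (bb true false) (bb false true) (bb true true) (bb false true)),
  (mkF (bb false true) (bb true true) (bb false true) (bb true false), mkF (bb false true) (bb false true) (bb true true) (bb false true)),
  (mkF (bb false true) (bb true true) (bb false true) (bb false true), mkF (bb false true) (bb false true) (bb false false) (bb false true)),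
  (mkF (bb false true) (bb true true) (bb true true) (bb true true), mkF (bb true true) (bb false true) (bb true false) (bb false true)),
  (mkF (bb true true) (bb false false) (bb true false) (bb false false), mkF (bb false false) (bb true false) (bb true true) (bb true true)),
  (mkF (bb true true) (bb false false) (bb true true) (bb false true), mkF (bb true true) (bb true true) (bb false false) (bb true false)),
  (mkF (bb true true) (bb true false) (bb true false) (bb true false), mkF (bb true false) (bb false false) (bb true true) (bb true true)),
  (mkF (bb true true) (bb true false) (bb true true) (bb true true), mkF (bb true true) (bb true true) (bb true false) (bb false false)),
  (mkF (bb true true) (bb false true) (bb false false) (bb false false), mkF (bb false false) (bb true true) (bb false true) (bb true true)),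
  (mkF (bb true true) (bb false true) (bb true false) (bb true false), mkF (bb true false) (bb true true) (bb true true) (bb true true)),
  (mkF (bb true true) (bb false true) (bb true false) (bb false true), mkF (bb false true) (bb true true) (bb true true) (bb true true)),
  (mkF (bb true true) (bb false true) (bb false true) (bb false true), mkF (bb false true) (bb true true) (bb false false) (bb true true)),
  (mkF (bb true true) (bb false true) (bb true true) (bb false false), mkF (bb true true) (bb true true) (bb false true) (bb true true)),
  (mkF (bb true true) (bb false true) (bb true true) (bb true true), mkF (bb true true) (bb true true) (bb true false) (bb true true)),
  (mkF (bb true true) (bb true true) (bb false false) (bb true false), mkF (bb true true) (bb false false) (bb true true) (bb false true)),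
  (mkF (bb true true) (bb true true) (bb true false) (bb false false), mkF (bb true true) (bb true false) (bb true true) (bb true true)),
  (mkF (bb true true) (bb true true) (bb true false) (bb true true), mkF (bb true true) (bb false true) (bb true true) (bb true true)),
  (mkF (bb true true) (bb true true) (bb false true) (bb true true), mkF (bb true true) (bb false true) (bb true true) (bb false false)),
  (mkF (bb true true) (bb true true) (bb true true) (bb true false), mkF (bb true true) (bb true true) (bb true true) (bb false true)),
  (mkF (bb true true) (bb true true) (bb true true) (bb false true), mkF (bb true true) (bb true true) (bb true true) (bb true false))]

def NA (x y u v : Bits 2) : ℕ :=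
  ∑ i : Fin 64, (if x = (SA i).1 u ∧ y = (SA i).2 v then 1 else 0)

def NB (x y u v : Bits 2) : ℕ :=
  ∑ i : Fin 64, (if x = (SB i).1 u ∧ y = (SB i).2 v then 1 else 0)

set_option maxRecDepth 40000 in
lemma factNA : ∀ x0 x1 y0 y1 u0 u1 v0 v1 : Bool,
    NA (bb x0 x1) (bb y0 y1) (bb u0 u1) (bb v0 v1) =
      (if xor x0 y0 = (u0 && v0) then (if xor x1 y1 = (u1 && v1) then 8 else 4)
       else (if xor x1 y1 = (u1 && v1) then 4 else 0)) := by decide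

set_option maxRecDepth 40000 in
lemma factNB : ∀ x0 x1 y0 y1 u0 u1 v0 v1 : Bool,
    NB (bb x0 x1) (bb y0 y1) (bb u0 u1) (bb v0 v1) =
      (if xor x0 y0 = (u0 && v0) then (if xor x1 y1 = (u1 && v1) then 10 else 2)
       else 2) := by decide

----------------------------------------------------------------
-- PR boxes on 1 and 2 copies
----------------------------------------------------------------

noncomputable def PRK (a b c d : Bool) : ℝ := if xor a b = (c && d) then 1/2 else 0

noncomputable def PR1 : Box 1 := fun x y u v => PRK (x 0) (y 0) (u 0) (v 0)

noncomputable def PR2 : Box 2 :=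
  fun x y u v => PRK (x 0) (y 0) (u 0) (v 0) * PRK (x 1) (y 1) (u 1) (v 1)

lemma sum_bits1 (f : Bits 1 → ℝ) : ∑ x : Bits 1, f x = f (c1 false) + f (c1 true) := by
  rw [← Equiv.sum_comp (Equiv.funUnique (Fin 1) Bool).symm f, Fintype.sum_bool]
  show f (c1 true) + f (c1 false) = f (c1 false) + f (c1 true)
  exact add_comm _ _

lemma sum_bits2 (f : Bits 2 → ℝ) :
    ∑ x : Bits 2, f x
      = f (bb false false) + f (bb false true) + f (bb true false) + f (bb true true) := by
  rw [← Equiv.sum_comp (finTwoArrowEquiv Bool).symm f, Fintype.sum_prod_type,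
    Fintype.sum_bool, Fintype.sum_bool, Fintype.sum_bool]
  show f (bb true true) + f (bb true false) + (f (bb false true) + f (bb false false)) = _
  ring

lemma pr1_sum_x (y u v : Bits 1) : ∑ x : Bits 1, PR1 x y u v = 1/2 := by
  rw [sum_bits1]
  show PRK false (y 0) (u 0) (v 0) + PRK true (y 0) (u 0) (v 0) = 1/2
  cases hy : y 0 <;> cases hu : u 0 <;> cases hv : v 0 <;> norm_num [PRK]

lemma pr1_sum_y (x u v : Bits 1) : ∑ y : Bits 1, PR1 x y u v = 1/2 := by
  rw [sum_bits1]
  show PRK (x 0) false (u 0) (v 0) + PRK (x 0) true (u 0) (v 0) = 1/2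
  cases hy : x 0 <;> cases hu : u 0 <;> cases hv : v 0 <;> norm_num [PRK]

lemma pr1_isBox : IsBox PR1 := by
  constructor
  · intro x y u v
    unfold PR1 PRK
    split_ifs <;> norm_num
  · intro u v
    have : ∀ x : Bits 1, ∑ y : Bits 1, PR1 x y u v = 1/2 := fun x => pr1_sum_y x u v
    simp only [this]
    rw [sum_bits1]
    norm_num

lemma pr1_ns : NonSignalling PR1 :=
  ⟨fun y v u u' => by rw [pr1_sum_x, pr1_sum_x],
   fun x u v v' => by rw [pr1_sum_y, pr1_sum_y]⟩

lemma pr2_sum_x (y u v : Bits 2) : ∑ x : Bits 2, PR2 x y u v = 1/4 := by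
  rw [sum_bits2]
  show PRK false (y 0) (u 0) (v 0) * PRK false (y 1) (u 1) (v 1)
      + PRK false (y 0) (u 0) (v 0) * PRK true (y 1) (u 1) (v 1)
      + PRK true (y 0) (u 0) (v 0) * PRK false (y 1) (u 1) (v 1)
      + PRK true (y 0) (u 0) (v 0) * PRK true (y 1) (u 1) (v 1) = 1/4
  cases hy0 : y 0 <;> cases hy1 : y 1 <;> cases hu0 : u 0 <;> cases hu1 : u 1 <;>
    cases hv0 : v 0 <;> cases hv1 : v 1 <;> norm_num [PRK]

lemma pr2_sum_y (x u v : Bits 2) : ∑ y : Bits 2, PR2 x y u v = 1/4 := by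
  rw [sum_bits2]
  show PRK (x 0) false (u 0) (v 0) * PRK (x 1) false (u 1) (v 1)
      + PRK (x 0) false (u 0) (v 0) * PRK (x 1) true (u 1) (v 1)
      + PRK (x 0) true (u 0) (v 0) * PRK (x 1) false (u 1) (v 1)
      + PRK (x 0) true (u 0) (v 0) * PRK (x 1) true (u 1) (v 1) = 1/4
  cases hy0 : x 0 <;> cases hy1 : x 1 <;> cases hu0 : u 0 <;> cases hu1 : u 1 <;>
    cases hv0 : v 0 <;> cases hv1 : v 1 <;> norm_num [PRK]

lemma pr2_isBox : IsBox PR2 := by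
  constructor
  · intro x y u v
    unfold PR2 PRK
    split_ifs <;> norm_num
  · intro u v
    have : ∀ x : Bits 2, ∑ y : Bits 2, PR2 x y u v = 1/4 := fun x => pr2_sum_y x u v
    simp only [this]
    rw [sum_bits2]
    norm_num

lemma pr2_ns : NonSignalling PR2 :=
  ⟨fun y v u u' => by rw [pr2_sum_x, pr2_sum_x],
   fun x u v v' => by rw [pr2_sum_y, pr2_sum_y]⟩

----------------------------------------------------------------
-- the basic decompositions
----------------------------------------------------------------

lemma identity1 (ε : ℝ) (x y u v : Bits 1) :
    isoPRB 1 ε x y u v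
      = 4 * ε * ((N1 x y u v : ℝ) / 8) + (1 - 4 * ε) * PR1 x y u v := by
  rw [← eta1 x, ← eta1 y, ← eta1 u, ← eta1 v]
  rw [factN1]
  show (∏ i : Fin 1, isoPRB1 ε (c1 (x 0) i) (c1 (y 0) i) (c1 (u 0) i) (c1 (v 0) i)) = _
  rw [Fin.prod_univ_one]
  show isoPRB1 ε (x 0) (y 0) (u 0) (v 0)
      = _ + (1 - 4*ε) * PRK (x 0) (y 0) (u 0) (v 0)
  by_cases h : xor (x 0) (y 0) = (u 0 && v 0) <;>
    simp only [isoPRB1, PRK, h, if_true, if_false] <;> push_cast <;> ring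

lemma identity2 (ε : ℝ) (x y u v : Bits 2) :
    isoPRB 2 ε x y u v
      = 4 * ε * ((1 - 2*ε) * ((NA x y u v : ℝ) / 64) + 2*ε * ((NB x y u v : ℝ) / 64))
        + (1 - 4 * ε) * PR2 x y u v := by
  rw [← eta2 x, ← eta2 y, ← eta2 u, ← eta2 v]
  rw [factNA, factNB]
  show (∏ i : Fin 2, isoPRB1 ε (bb (x 0) (x 1) i) (bb (y 0) (y 1) i)
          (bb (u 0) (u 1) i) (bb (v 0) (v 1) i)) = _
  rw [Fin.prod_univ_two]
  show isoPRB1 ε (x 0) (y 0) (u 0) (v 0) * isoPRB1 ε (x 1) (y 1) (u 1) (v 1)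
      = _ + (1 - 4*ε) * (PRK (x 0) (y 0) (u 0) (v 0) * PRK (x 1) (y 1) (u 1) (v 1))
  by_cases h0 : xor (x 0) (y 0) = (u 0 && v 0) <;>
    by_cases h1 : xor (x 1) (y 1) = (u 1 && v 1) <;>
    simp only [isoPRB1, PRK, h0, h1, if_true, if_false] <;>
    push_cast <;> ring

lemma base1 {ε : ℝ} (hε0 : 0 ≤ ε) (hε : ε ≤ 1/4) : memS (4*ε) (isoPRB 1 ε) := by
  have hloc : IsLocal (mixBox S1 (fun _ => (1/8 : ℝ))) := by
    refine mixBox_isLocal _ _ (fun i => by norm_num) ?_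
    norm_num [Finset.sum_const, Finset.card_univ]
  have hval : ∀ x y u v : Bits 1,
      mixBox S1 (fun _ => (1/8 : ℝ)) x y u v = (N1 x y u v : ℝ) / 8 := by
    intro x y u v
    have hN : (N1 x y u v : ℝ)
        = ∑ i : Fin 8, (if x = (S1 i).1 u ∧ y = (S1 i).2 v then (1:ℝ) else 0) := by
      unfold N1
      push_cast
      rfl
    unfold mixBox detBox
    rw [hN, Finset.sum_div]
    refine Finset.sum_congr rfl fun i _ => ?_
    split_ifs <;> norm_num
  refine ⟨by linarith, by linarith, mixBox S1 (fun _ => (1/8 : ℝ)), PR1,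
    isLocal_isBox hloc, hloc, pr1_isBox, pr1_ns, ?_⟩
  intro x y u v
  rw [identity1 ε x y u v, hval]

lemma base2 {ε : ℝ} (hε0 : 0 ≤ ε) (hε : ε ≤ 1/4) : memS (4*ε) (isoPRB 2 ε) := by
  have h2 : (0:ℝ) ≤ 1 - 2*ε := by linarith
  set c : Fin (64 + 64) → ℝ :=
    Fin.append (fun _ => (1 - 2*ε)/64) (fun _ => 2*ε/64) with hc
  set S : Fin (64 + 64) → Strat2 := Fin.append SA SB with hS
  have hcn : ∀ i, 0 ≤ c i := by
    intro i
    refine Fin.addCases (fun j => ?_) (fun j => ?_) i <;>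
      simp only [hc, Fin.append_left, Fin.append_right]
    · exact div_nonneg h2 (by norm_num)
    · exact div_nonneg (by linarith) (by norm_num)
  have hcs : ∑ i, c i = 1 := by
    rw [Fin.sum_univ_add]
    simp only [hc, Fin.append_left, Fin.append_right]
    rw [Finset.sum_const, Finset.sum_const]
    simp [Finset.card_univ, nsmul_eq_mul]
    ring
  have hloc : IsLocal (mixBox S c) := mixBox_isLocal S c hcn hcs
  have hval : ∀ x y u v : Bits 2,
      mixBox S c x y u v
        = (1 - 2*ε) * ((NA x y u v : ℝ) / 64) + 2*ε * ((NB x y u v : ℝ) / 64) := by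
    intro x y u v
    have hNA : (NA x y u v : ℝ)
        = ∑ i : Fin 64, detBox (SA i).1 (SA i).2 x y u v := by
      unfold NA detBox
      push_cast
      rfl
    have hNB : (NB x y u v : ℝ)
        = ∑ i : Fin 64, detBox (SB i).1 (SB i).2 x y u v := by
      unfold NB detBox
      push_cast
      rfl
    unfold mixBox
    rw [Fin.sum_univ_add]
    simp only [hc, hS, Fin.append_left, Fin.append_right]
    rw [← Finset.mul_sum, ← Finset.mul_sum, hNA, hNB]
    ring
  refine ⟨by linarith, by linarith, mixBox S c, PR2,
    isLocal_isBox hloc, hloc, pr2_isBox, pr2_ns, ?_⟩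
  intro x y u v
  rw [identity2 ε x y u v, hval]

----------------------------------------------------------------
-- assembling the induction
----------------------------------------------------------------

lemma main_mem {ε : ℝ} (hε0 : 0 ≤ ε) (hε : ε ≤ 1/4) (k : ℕ) :
    memS ((4*ε)^(k+1)) (isoPRB (2*k+1) ε) ∧ memS ((4*ε)^(k+1)) (isoPRB (2*k+2) ε) := by
  induction k with
  | zero =>
    constructor
    · simpa using base1 hε0 hε
    · simpa using base2 hε0 hε
  | succ k ih =>
    have h2 := base2 hε0 hε
    constructor
    · have h := tensor_memS ih.1 h2
      rw [← isoPRB_add, ← pow_succ] at h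
      have hn : 2*(k+1)+1 = 2*k+1+2 := by ring
      rw [hn]
      exact h
    · have h := tensor_memS ih.2 h2
      rw [← isoPRB_add, ← pow_succ] at h
      have hn : 2*(k+1)+2 = 2*k+2+2 := by ring
      rw [hn]
      exact h

lemma mem_all {ε : ℝ} (hε0 : 0 ≤ ε) (hε : ε ≤ 1/4) (n : ℕ) (hn : 1 ≤ n) :
    memS ((4*ε)^((n+1)/2)) (isoPRB n ε) := by
  rcases Nat.even_or_odd n with he | ho
  · obtain ⟨j, hj⟩ : ∃ j, n = 2*j+2 := by
      obtain ⟨m, hm⟩ := he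
      exact ⟨m - 1, by omega⟩
    subst hj
    rw [show (2*j+2+1)/2 = j+1 by omega]
    exact (main_mem hε0 hε j).2
  · obtain ⟨j, hj⟩ := ho
    subst hj
    rw [show (2*j+1+1)/2 = j+1 by omega]
    exact (main_mem hε0 hε j).1


/-- the local part of n isotropic ε-PRBs is at least `(4ε)^⌈n/2⌉`. -/
theorem stmt11 (n : ℕ) (hn : 1 ≤ n) (ε : ℝ) (hε0 : 0 ≤ ε) (hε : ε ≤ 1 / 4) :
    (4 * ε) ^ ((n + 1) / 2) ≤ localPart (isoPRB n ε) := by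
  exact memS_le_localPart (mem_all hε0 hε n hn)
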